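/- arXiv:1711.01462 — 5 statements merged into one kernel-verified Lean document; each statement's English description precedes it below -/
import Mathlib

section
/- Let X be connected, locally path connected, and a strong H-SLT space at x₀. Then the core of H in π₁(X,x₀) is open in π₁^{qtop}(X,x₀) if and only if H is open in π₁^{qtop}(X,x₀). -/
open CategoryTheory unitInterval
open scoped Topology

attribute [local instance] Path.Homotopic.setoid

noncomputable section

/-- The homotopy class of a loop as an element of the fundamental group. -/
def loopClass {X : Type*} [TopologicalSpace X] {x : X} (γ : Path x x) :
    FundamentalGroup X x :=
  FundamentalGroup.fromPath
    (⟦γ⟧ : Path.Homotopic.Quotient x x)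

variable {X : Type*} [TopologicalSpace X]

/-- The Spanier group of a family of subsets of `X`, based at `x`: the subgroup generated by
classes `[α∗β∗α⁻¹]` where `α` is a path from `x` and `β` is a loop inside a member of `𝒰`. -/
def spanierGroupAt (x : X) (𝒰 : Set (Set X)) : Subgroup (FundamentalGroup X x) :=
  Subgroup.closure {g | ∃ (y : X) (α : Path x y) (β : Path y y) (U : Set X),
    U ∈ 𝒰 ∧ (∀ t, β t ∈ U) ∧ g = loopClass (α.trans (β.trans α.symm))}

/-- `𝒰` is an open cover of `X`. -/
def IsOpenCover (𝒰 : Set (Set X)) : Prop := (∀ U ∈ 𝒰, IsOpen U) ∧ ⋃₀ 𝒰 = Set.univ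

/-- `X` is a strong `H`-SLT space at `x₀`: for every `x ∈ X` and every open neighborhood `U`
of `x₀` there is an open neighborhood `V` of `x` such that for every loop `β` in `V` based at
`x` and every path `α` from `x₀` to `x` there is a loop `λ` in `U` based at `x₀` with
`[α∗β∗α⁻¹∗λ⁻¹] ∈ H`. -/
def StrongHSLTAt (x₀ : X) (H : Subgroup (FundamentalGroup X x₀)) : Prop :=
  ∀ (x : X) (U : Set X), IsOpen U → x₀ ∈ U →
    ∃ V : Set X, IsOpen V ∧ x ∈ V ∧
      ∀ (β : Path x x), (∀ t, β t ∈ V) → ∀ (α : Path x₀ x),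
        ∃ lam : Path x₀ x₀, (∀ t, lam t ∈ U) ∧
          loopClass (α.trans (β.trans α.symm)) * (loopClass lam)⁻¹ ∈ H

/-- The quotient topology on the fundamental group induced by the compact-open topology on
the loop space, i.e. the topology of the quasitopological fundamental group `π₁^qtop`. -/
def qtop (x₀ : X) : TopologicalSpace (FundamentalGroup X x₀) :=
  TopologicalSpace.coinduced (fun γ : Path x₀ x₀ => loopClass γ) inferInstance

/-!
If `H` is open, every loop in some neighbourhood `U` of `x₀` represents an element of `H`. The
strong `H`-SLT property turns this into: the Spanier group of a suitable open cover lies in `H`,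
and since conjugates of Spanier generators are again generators, it lies in the core of `H`.
Spanier groups of open covers are open in `π₁^qtop` of a locally path connected space: a loop `δ`
close to `γ` differs from `γ`, piece by piece along a fine subdivision, by conjugates of small
loops. Finally, translations of `π₁^qtop` are continuous, so a subgroup containing an open
subgroup is open; this gives both implications.
-/

open Set Filter

namespace Path.Homotopic.Quotient

variable {x y z : X}

@[simp]
theorem trans_symm_trans (γ : Path.Homotopic.Quotient x y) (δ : Path.Homotopic.Quotient x z) :
    γ.trans (γ.symm.trans δ) = δ := by
  rw [← trans_assoc, trans_symm, refl_trans]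

@[simp]
theorem symm_trans_trans (γ : Path.Homotopic.Quotient x y) (δ : Path.Homotopic.Quotient y z) :
    γ.symm.trans (γ.trans δ) = δ := by
  rw [← trans_assoc, symm_trans, refl_trans]

@[simp]
theorem symm_trans_rev (γ : Path.Homotopic.Quotient x y) (δ : Path.Homotopic.Quotient y z) :
    (γ.trans δ).symm = δ.symm.trans γ.symm := by
  induction γ using Quotient.ind
  induction δ using Quotient.ind
  simp only [← mk_trans, ← mk_symm, Path.trans_symm]

end Path.Homotopic.Quotient

namespace Path

variable {x y : X}

def initialSubpath (γ : Path x y) (t : I) : Path x (γ t) :=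
  (γ.subpath 0 t).cast γ.source.symm rfl

theorem range_initialSubpath (γ : Path x y) (t : I) :
    range (γ.initialSubpath t) = γ '' Icc 0 t := by
  simp [initialSubpath, range_subpath_of_le γ 0 t unitInterval.nonneg']

theorem initialSubpath_trans_subpath (γ : Path x y) (t₁ t₂ : I) :
    ((γ.initialSubpath t₁).trans (γ.subpath t₁ t₂)).Homotopic (γ.initialSubpath t₂) :=
  ⟨(Homotopy.subpathTransSubpath γ 0 t₁ t₂).pathCast γ.source.symm rfl⟩

theorem initialSubpath_apply_of_eq_one (γ : Path x y) {t : I} (ht : t = 1) (s : I) :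
    γ.initialSubpath t s = γ s := by
  subst ht
  simp [initialSubpath, subpath, Set.Icc.convexComb_zero_one]

end Path

variable {x₀ : X}

theorem loopClass_eq_mk (γ : Path x₀ x₀) : loopClass γ = Path.Homotopic.Quotient.mk γ := rfl

theorem loopClass_surjective : Function.Surjective (loopClass : Path x₀ x₀ → _) :=
  Path.Homotopic.Quotient.mk_surjective

theorem isOpen_qtop_iff {s : Set (FundamentalGroup X x₀)} :
    IsOpen[qtop x₀] s ↔ IsOpen {γ : Path x₀ x₀ | loopClass γ ∈ s} :=
  isOpen_coinduced

theorem continuous_qtop_mul_left (g : FundamentalGroup X x₀) :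
    Continuous[qtop x₀, qtop x₀] (g * ·) := by
  let := qtop x₀
  obtain ⟨δ, rfl⟩ := loopClass_surjective g
  have hloop : Continuous (loopClass : Path x₀ x₀ → _) := continuous_coinduced_rng
  exact continuous_coinduced_dom.mpr (hloop.comp (continuous_id.path_trans continuous_const))

theorem isOpen_qtop_of_le {S K : Subgroup (FundamentalGroup X x₀)} (hSK : S ≤ K)
    (hS : IsOpen[qtop x₀] (S : Set (FundamentalGroup X x₀))) :
    IsOpen[qtop x₀] (K : Set (FundamentalGroup X x₀)) := by
  let := qtop x₀
  refine isOpen_iff_forall_mem_open.mpr fun g hg =>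
    ⟨(g⁻¹ * ·) ⁻¹' S, fun h hh => ?_, (continuous_qtop_mul_left g⁻¹).isOpen_preimage _ hS, ?_⟩
  · simpa only [mul_inv_cancel_left, SetLike.mem_coe] using K.mul_mem hg (hSK hh)
  · simpa only [mem_preimage, inv_mul_cancel, SetLike.mem_coe] using S.one_mem

theorem Path.exists_forall_range_subset_mem_of_mem_nhds_refl {P : Set (Path x₀ x₀)}
    (hP : P ∈ 𝓝 (Path.refl x₀)) :
    ∃ U, IsOpen U ∧ x₀ ∈ U ∧ ∀ γ : Path x₀ x₀, range γ ⊆ U → γ ∈ P := by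
  rw [nhds_induced] at hP
  obtain ⟨Q, hQ, hQP⟩ := hP
  obtain ⟨⟨K, U⟩, ⟨-, hx₀U, hU⟩, hKU⟩ :=
    ((nhds_basis_opens x₀).nhds_continuousMapConst (X := I)).mem_iff.mp hQ
  exact ⟨U, hU, hx₀U, fun γ hγ => hQP (hKU fun s _ => hγ (mem_range_self s))⟩

/-- Writing `Λ k := B k ∗ (q k)⁻¹ ∗ (A k)⁻¹`, the class of `Λ (k + 1)` is that of `Λ k` multiplied
by the conjugate of the loop `q k ∗ d k ∗ (q (k + 1))⁻¹ ∗ (c k)⁻¹` along `A k`. -/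
theorem loopClass_mem_of_telescope (K : Subgroup (FundamentalGroup X x₀)) {a b : ℕ → X}
    {A : ∀ k, Path x₀ (a k)} {B : ∀ k, Path x₀ (b k)} {q : ∀ k, Path (a k) (b k)}
    {c : ∀ k, Path (a k) (a (k + 1))} {d : ∀ k, Path (b k) (b (k + 1))}
    (hA : ∀ k, ((A k).trans (c k)).Homotopic (A (k + 1)))
    (hB : ∀ k, ((B k).trans (d k)).Homotopic (B (k + 1))) {m : ℕ}
    (hstep : ∀ k < m, loopClass ((A k).trans
      (((q k).trans ((d k).trans ((q (k + 1)).symm.trans (c k).symm))).trans (A k).symm)) ∈ K)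
    (hbase : loopClass ((B 0).trans ((q 0).symm.trans (A 0).symm)) ∈ K) :
    loopClass ((B m).trans ((q m).symm.trans (A m).symm)) ∈ K := by
  induction m with
  | zero => exact hbase
  | succ k ih =>
    have hsplit : loopClass ((B (k + 1)).trans ((q (k + 1)).symm.trans (A (k + 1)).symm)) =
        loopClass ((A k).trans
          (((q k).trans ((d k).trans ((q (k + 1)).symm.trans (c k).symm))).trans (A k).symm)) *
        loopClass ((B k).trans ((q k).symm.trans (A k).symm)) := by
      simp [loopClass_eq_mk, FundamentalGroup.mul_def, Path.Homotopic.Quotient.mk_trans,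
        Path.Homotopic.Quotient.mk_symm, ← Path.Homotopic.Quotient.eq.mpr (hA k),
        ← Path.Homotopic.Quotient.eq.mpr (hB k)]
    rw [hsplit]
    exact K.mul_mem (hstep k k.lt_succ_self) (ih fun j hj => hstep j (hj.trans k.lt_succ_self))

section Spanier

variable {𝒰 : Set (Set X)} {U : Set X}

theorem loopClass_conj_mem_spanierGroupAt (hU : U ∈ 𝒰) {y : X} {β : Path y y} (hβ : range β ⊆ U)
    (α : Path x₀ y) : loopClass (α.trans (β.trans α.symm)) ∈ spanierGroupAt x₀ 𝒰 :=
  Subgroup.subset_closure ⟨y, α, β, U, hU, range_subset_iff.mp hβ, rfl⟩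

theorem loopClass_mem_spanierGroupAt (hU : U ∈ 𝒰) {γ : Path x₀ x₀} (hγ : range γ ⊆ U) :
    loopClass γ ∈ spanierGroupAt x₀ 𝒰 := by
  simpa [loopClass_eq_mk, Path.Homotopic.Quotient.mk_trans, Path.Homotopic.Quotient.mk_symm,
    Path.Homotopic.Quotient.mk_refl] using loopClass_conj_mem_spanierGroupAt hU hγ (Path.refl x₀)

/-- At `j = 0` the truncated subtraction makes `W (j - 1) ∩ W j = W 0`. -/
theorem loopClass_mem_spanierGroupAt_of_subdivision {γ δ : Path x₀ x₀} {t : ℕ → I} {m : ℕ}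
    {W : ℕ → Set X} (hW : ∀ k, W k ∈ 𝒰) (ht : Monotone t) (ht₀ : t 0 = 0) (htm : t m = 1)
    (hγ : ∀ k < m, MapsTo γ (Icc (t k) (t (k + 1))) (W k))
    (hδ : ∀ k < m, MapsTo δ (Icc (t k) (t (k + 1))) (W k))
    (hjoin : ∀ j ≤ m, JoinedIn (W (j - 1) ∩ W j) (γ (t j)) (δ (t j)))
    (hγS : loopClass γ ∈ spanierGroupAt x₀ 𝒰) : loopClass δ ∈ spanierGroupAt x₀ 𝒰 := by
  have hpaths : ∀ j, ∃ p : Path (γ (t j)) (δ (t j)), j ≤ m → range p ⊆ W (j - 1) ∩ W j :=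
    fun j => if hj : j ≤ m then
      ⟨(hjoin j hj).somePath, fun _ => range_subset_iff.mpr (hjoin j hj).somePath_mem⟩
    -- beyond `m` the paths `q j` play no role
    else ⟨(γ.initialSubpath (t j)).symm.trans (δ.initialSubpath (t j)), fun h => absurd h hj⟩
  choose q hq using hpaths
  have hx₀ : x₀ ∈ W 0 := by
    simpa [ht₀] using ((hq 0 m.zero_le) (mem_range_self 0)).2
  have hend := loopClass_mem_of_telescope (spanierGroupAt x₀ 𝒰) (m := m) (q := q)
    (fun k => γ.initialSubpath_trans_subpath (t k) (t (k + 1)))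
    (fun k => δ.initialSubpath_trans_subpath (t k) (t (k + 1)))
    (fun k hk => loopClass_conj_mem_spanierGroupAt (hW k) (by
      simp only [Path.trans_range, Path.symm_range, Path.range_subpath_of_le _ _ _ (ht k.le_succ)]
      refine union_subset ((hq k hk.le).trans inter_subset_right) (union_subset
        (hδ k hk).image_subset (union_subset ?_ (hγ k hk).image_subset))
      simpa using (hq (k + 1) hk).trans inter_subset_left) _)
    (loopClass_mem_spanierGroupAt (hW 0) (by
      simp only [Path.trans_range, Path.symm_range, Path.range_initialSubpath, ht₀]
      simpa [insert_subset_iff, hx₀] using (hq 0 m.zero_le).trans inter_subset_right))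
  set q' : Path x₀ x₀ := (q m).cast (by simp [htm]) (by simp [htm])
  have hΛ : (δ.initialSubpath (t m)).trans ((q m).symm.trans (γ.initialSubpath (t m)).symm) =
      δ.trans (q'.symm.trans γ.symm) := by
    ext s
    simp [Path.trans_apply, Path.initialSubpath_apply_of_eq_one _ htm, q']
  have hq' : loopClass q' ∈ spanierGroupAt x₀ 𝒰 :=
    loopClass_mem_spanierGroupAt (hW m) ((hq m le_rfl).trans inter_subset_right)
  have hδ_eq : loopClass δ =
      loopClass q' * loopClass γ * loopClass (δ.trans (q'.symm.trans γ.symm)) := by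
    simp [loopClass_eq_mk, FundamentalGroup.mul_def, Path.Homotopic.Quotient.mk_trans,
      Path.Homotopic.Quotient.mk_symm]
  rw [hδ_eq, ← hΛ]
  exact mul_mem (mul_mem hq' hγS) hend

theorem isOpen_spanierGroupAt [LocallyPathConnectedSpace X] (h𝒰 : IsOpenCover 𝒰) :
    IsOpen[qtop x₀] (spanierGroupAt x₀ 𝒰 : Set (FundamentalGroup X x₀)) := by
  rw [isOpen_qtop_iff, isOpen_iff_mem_nhds]
  intro γ hγS
  obtain ⟨t, ht₀, ht, ⟨m, htm⟩, hcover⟩ :=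
    exists_monotone_Icc_subset_open_cover_unitInterval (c := fun U : 𝒰 => γ ⁻¹' U)
      (fun U => (h𝒰.1 U U.2).preimage γ.continuous)
      (fun s _ => by simpa using eq_univ_iff_forall.mp h𝒰.2 (γ s))
  have hcover' : ∀ k, ∃ U ∈ 𝒰, MapsTo γ (Icc (t k) (t (k + 1))) U := fun k =>
    let ⟨U, hU⟩ := hcover k; ⟨U, U.2, hU⟩
  choose W hW𝒰 hW using hcover'
  have hγW : ∀ j, γ (t j) ∈ W (j - 1) ∩ W j := fun j =>
    ⟨hW (j - 1) ⟨ht (Nat.sub_le j 1), ht (by omega)⟩, hW j ⟨le_rfl, ht j.le_succ⟩⟩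
  have hmaps : ∀ᶠ δ : Path x₀ x₀ in 𝓝 γ, ∀ k < m, MapsTo δ (Icc (t k) (t (k + 1))) (W k) :=
    (eventually_all_finite (finite_Iio m)).mpr fun k _ =>
      (continuous_induced_dom.tendsto γ).eventually
        (ContinuousMap.eventually_mapsTo isCompact_Icc (h𝒰.1 _ (hW𝒰 k)) (hW k))
  have hjoin : ∀ᶠ δ : Path x₀ x₀ in 𝓝 γ, ∀ j ≤ m,
      δ (t j) ∈ pathComponentIn (W (j - 1) ∩ W j) (γ (t j)) :=
    (eventually_all_finite (finite_Iic m)).mpr fun j _ =>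
      ((continuous_eval_const (t j)).tendsto γ).eventually
        ((((h𝒰.1 _ (hW𝒰 _)).inter (h𝒰.1 _ (hW𝒰 _))).pathComponentIn _).mem_nhds
          (mem_pathComponentIn_self (hγW j)))
  filter_upwards [hmaps, hjoin] with δ hδ hδj
  exact loopClass_mem_spanierGroupAt_of_subdivision hW𝒰 ht ht₀ (htm m le_rfl)
    (fun k _ => hW k) hδ hδj hγS

theorem spanierGroupAt_le_normalCore {H : Subgroup (FundamentalGroup X x₀)}
    (h : spanierGroupAt x₀ 𝒰 ≤ H) : spanierGroupAt x₀ 𝒰 ≤ H.normalCore := by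
  refine (Subgroup.closure_le _).mpr ?_
  rintro _ ⟨y, α, β, U, hU, hβ, rfl⟩ g
  refine h ?_
  obtain ⟨f, rfl⟩ := loopClass_surjective g
  have hconj : loopClass f * loopClass (α.trans (β.trans α.symm)) * (loopClass f)⁻¹ =
      loopClass ((f.symm.trans α).trans (β.trans (f.symm.trans α).symm)) := by
    simp [loopClass_eq_mk, FundamentalGroup.mul_def, FundamentalGroup.inv_def,
      Path.Homotopic.Quotient.mk_trans, Path.Homotopic.Quotient.mk_symm]
  rw [hconj]
  exact loopClass_conj_mem_spanierGroupAt hU (range_subset_iff.mpr hβ) _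

theorem spanierGroupAt_le_of_strongHSLTAt [LocallyPathConnectedSpace X]
    {H : Subgroup (FundamentalGroup X x₀)} (hX : StrongHSLTAt x₀ H) (hU : IsOpen U)
    (hx₀U : x₀ ∈ U) (hUH : ∀ γ : Path x₀ x₀, range γ ⊆ U → loopClass γ ∈ H) :
    ∃ 𝒰, IsOpenCover 𝒰 ∧ spanierGroupAt x₀ 𝒰 ≤ H := by
  choose V hV hxV hVH using fun x => hX x U hU hx₀U
  refine ⟨range fun x => pathComponentIn (V x) x, ⟨?_, ?_⟩, (Subgroup.closure_le H).mpr ?_⟩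
  · rintro _ ⟨x, rfl⟩
    exact (hV x).pathComponentIn x
  · exact eq_univ_of_forall fun x => ⟨_, ⟨x, rfl⟩, mem_pathComponentIn_self (hxV x)⟩
  rintro _ ⟨y, α, β, _, ⟨x, rfl⟩, hβ, rfl⟩
  have hy : JoinedIn (V x) x y := β.source ▸ hβ 0
  set p := hy.somePath
  have hp : range p ⊆ V x := range_subset_iff.mpr hy.somePath_mem
  have hβ' : range (p.trans (β.trans p.symm)) ⊆ V x := by
    simp only [Path.trans_range, Path.symm_range]
    exact union_subset hp (union_subset ((range_subset_iff.mpr hβ).trans pathComponentIn_subset) hp)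
  obtain ⟨lam, hlamU, hlamH⟩ := hVH x _ (range_subset_iff.mp hβ') (α.trans p.symm)
  have hconj : loopClass ((α.trans p.symm).trans
      ((p.trans (β.trans p.symm)).trans (α.trans p.symm).symm)) =
        loopClass (α.trans (β.trans α.symm)) := by
    simp [loopClass_eq_mk, Path.Homotopic.Quotient.mk_trans, Path.Homotopic.Quotient.mk_symm]
  rw [← hconj]
  simpa only [inv_mul_cancel_right, SetLike.mem_coe] using
    H.mul_mem hlamH (hUH lam (range_subset_iff.mpr hlamU))

end Spanier

theorem normalCore_open_iff_open_general
    {X : Type*} [TopologicalSpace X] [LocallyPathConnectedSpace X]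
    (x₀ : X) (H : Subgroup (FundamentalGroup X x₀)) (hX : StrongHSLTAt x₀ H) :
    IsOpen[qtop x₀] (H.normalCore : Set (FundamentalGroup X x₀)) ↔
      IsOpen[qtop x₀] (H : Set (FundamentalGroup X x₀)) := by
  refine ⟨isOpen_qtop_of_le H.normalCore_le, fun hH => ?_⟩
  obtain ⟨U, hU, hx₀U, hUH⟩ := Path.exists_forall_range_subset_mem_of_mem_nhds_refl
    ((isOpen_qtop_iff.mp hH).mem_nhds H.one_mem)
  obtain ⟨𝒰, h𝒰, hle⟩ := spanierGroupAt_le_of_strongHSLTAt hX hU hx₀U hUH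
  exact isOpen_qtop_of_le (spanierGroupAt_le_normalCore hle) (isOpen_spanierGroupAt h𝒰)

theorem normalCore_open_iff_open
    {X : Type*} [TopologicalSpace X] [ConnectedSpace X] [LocallyPathConnectedSpace X]
    (x₀ : X) (H : Subgroup (FundamentalGroup X x₀)) (hX : StrongHSLTAt x₀ H) :
    IsOpen[qtop x₀] (H.normalCore : Set (FundamentalGroup X x₀)) ↔
      IsOpen[qtop x₀] (H : Set (FundamentalGroup X x₀)) :=
  normalCore_open_iff_open_general x₀ H hX
end
end

section
/- Let p : X̃ → X be a semicovering map with p∗π₁(X̃, x̃₀) = H. If X is connected, locally path connected, and a strong H-SLT space at x₀, then p is a covering map. -/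
open CategoryTheory unitInterval
open scoped Topology

attribute [local instance] Path.Homotopic.setoid

noncomputable section

variable {X : Type*} [TopologicalSpace X]

/-- A semicovering map: a local homeomorphism with unique continuous lifting of paths
and of homotopies. -/
structure IsSemicoveringMap {E : Type*} [TopologicalSpace E] (p : E → X) : Prop where
  isLocalHomeomorph : IsLocalHomeomorph p
  path_lift : ∀ (γ : C(I, X)) (e : E), p e = γ 0 →
    ∃! γ' : C(I, E), p ∘ γ' = γ ∧ γ' 0 = e
  homotopy_lift : ∀ (Hm : C(I × I, X)) (e : E), p e = Hm (0, 0) →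
    ∃! H' : C(I × I, E), p ∘ H' = Hm ∧ H' (0, 0) = e

/-!
Lifting paths along a semicovering map `p` is unique, and homotopic paths lift to paths with the
same endpoint. Over a neighbourhood `U` of `x₀` on which `p` has a local inverse through `e₀`,
loops lift to loops at `e₀`. Given `x`, the strong `H`-SLT property provides a path connected
open `V ∋ x` such that for every `y ∈ V`, every loop at `y` in `V`, conjugated by a path from
`x₀`, equals modulo `H` a loop in `U`. Hence if `δ` is a path in `p ⁻¹' V` between two points
`e₁`, `e₂` of one fibre and `α` is the projection of a path from `e₀` to `e₁`, the loop
`α (p ∘ δ) α⁻¹` lifts to a loop at `e₀`. Its lift ends at the lift of `α⁻¹` from `e₂`, whereas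
the lift of `α⁻¹` from `e₁` ends at `e₀`, so `e₁ = e₂`. Thus `p` is injective on each path
component of `p ⁻¹' V`, and path lifting makes these components the sheets over `V`.
-/

namespace IsSemicoveringMap

variable {E : Type*} [TopologicalSpace E] {p : E → X} {x y z : X}

open Classical in
/-- The endpoint of the lift of `γ` starting at `e` (junk value `e` unless `p e = x`). -/
def liftEnd (hp : IsSemicoveringMap p) (γ : Path x y) (e : E) : E :=
  if h : p e = x then (hp.path_lift γ e (by simpa using h)).exists.choose 1 else e

theorem exists_lift (hp : IsSemicoveringMap p) (γ : Path x y) {e : E} (he : p e = x) :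
    ∃ Γ : Path e (hp.liftEnd γ e), ∀ t, p (Γ t) = γ t := by
  obtain ⟨hlift, hstart⟩ := (hp.path_lift γ e (by simpa using he)).exists.choose_spec
  exact ⟨⟨_, hstart, by simp [liftEnd, he]⟩, fun t => congrFun hlift t⟩

theorem liftEnd_eq (hp : IsSemicoveringMap p) {γ : Path x y} {e e' : E} (Γ : Path e e')
    (hΓ : ∀ t, p (Γ t) = γ t) : hp.liftEnd γ e = e' := by
  have he : p e = x := by simpa using hΓ 0
  have hlift := hp.path_lift γ e (by simpa using he)
  have huniq := hlift.unique hlift.exists.choose_spec (y₂ := Γ.toContinuousMap)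
    ⟨funext hΓ, Γ.source⟩
  simp only [liftEnd, he, dif_pos, huniq, Path.coe_toContinuousMap, Path.target]

theorem p_liftEnd (hp : IsSemicoveringMap p) (γ : Path x y) {e : E} (he : p e = x) :
    p (hp.liftEnd γ e) = y := by
  obtain ⟨Γ, hΓ⟩ := hp.exists_lift γ he
  simpa using hΓ 1

theorem liftEnd_trans (hp : IsSemicoveringMap p) (γ : Path x y) (γ' : Path y z) {e : E}
    (he : p e = x) : hp.liftEnd (γ.trans γ') e = hp.liftEnd γ' (hp.liftEnd γ e) := by
  obtain ⟨Γ, hΓ⟩ := hp.exists_lift γ he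
  obtain ⟨Γ', hΓ'⟩ := hp.exists_lift γ' (hp.p_liftEnd γ he)
  refine hp.liftEnd_eq (Γ.trans Γ') fun t => ?_
  simp only [Path.trans_apply]
  split_ifs <;> simp [hΓ, hΓ']

theorem liftEnd_symm_liftEnd (hp : IsSemicoveringMap p) (γ : Path x y) {e : E} (he : p e = x) :
    hp.liftEnd γ.symm (hp.liftEnd γ e) = e := by
  obtain ⟨Γ, hΓ⟩ := hp.exists_lift γ he
  exact hp.liftEnd_eq Γ.symm fun t => hΓ _

theorem liftEnd_injOn (hp : IsSemicoveringMap p) (γ : Path x y) :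
    Set.InjOn (hp.liftEnd γ) (p ⁻¹' {x}) := fun e₁ h₁ e₂ h₂ h => by
  rw [← hp.liftEnd_symm_liftEnd γ h₁, ← hp.liftEnd_symm_liftEnd γ h₂, h]

theorem eq_of_path_of_forall_apply_eq (hp : IsSemicoveringMap p) {e e' : E} (Γ : Path e e')
    (hΓ : ∀ t, p (Γ t) = x) : e = e' :=
  (hp.liftEnd_eq (Path.refl e) (γ := Path.refl x) fun _ => by simpa using hΓ 0).symm.trans
    (hp.liftEnd_eq Γ hΓ)

theorem liftEnd_eq_of_homotopic (hp : IsSemicoveringMap p) {γ₁ γ₂ : Path x y}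
    (h : γ₁.Homotopic γ₂) {e : E} (he : p e = x) : hp.liftEnd γ₁ e = hp.liftEnd γ₂ e := by
  obtain ⟨F⟩ := h
  obtain ⟨K, hK, hK₀⟩ := (hp.homotopy_lift F.toContinuousMap e (by simp [he])).exists
  have hKF (q : I × I) : p (K q) = F q := congrFun hK q
  let edge (f : I → I × I) (hf : Continuous f) : Path (K (f 0)) (K (f 1)) :=
    ⟨K.comp ⟨f, hf⟩, rfl, rfl⟩
  have bottom : K (0, 0) = K (1, 0) := hp.eq_of_path_of_forall_apply_eq (x := x)
    (edge (fun s => (s, 0)) (by fun_prop)) fun s => by simp [edge, hKF]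
  have top : K (0, 1) = K (1, 1) := hp.eq_of_path_of_forall_apply_eq (x := y)
    (edge (fun s => (s, 1)) (by fun_prop)) fun s => by simp [edge, hKF]
  have left : hp.liftEnd γ₁ (K (0, 0)) = K (0, 1) :=
    hp.liftEnd_eq (edge (fun t => (0, t)) (by fun_prop)) fun t => by simp [edge, hKF]
  have right : hp.liftEnd γ₂ (K (1, 0)) = K (1, 1) :=
    hp.liftEnd_eq (edge (fun t => (1, t)) (by fun_prop)) fun t => by simp [edge, hKF]
  rw [← hK₀, left, top, ← right, bottom]

theorem liftEnd_eq_symm_of_forall_mem_target (hp : IsSemicoveringMap p)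
    {φ : OpenPartialHomeomorph E X} (hφ : p = φ) {e : E} (he : e ∈ φ.source) (hx : p e = x)
    {γ : Path x y} (hγ : ∀ t, γ t ∈ φ.target) : hp.liftEnd γ e = φ.symm y := by
  subst hφ hx
  refine hp.liftEnd_eq ⟨⟨fun t => φ.symm (γ t), ?_⟩, ?_, ?_⟩ fun t => φ.right_inv (hγ t)
  · exact φ.continuousOn_symm.comp_continuous γ.continuous hγ
  · simp [φ.left_inv he]
  · simp

theorem exists_joinedIn_preimage (hp : IsSemicoveringMap p) {V : Set X} {e : E}
    (h : JoinedIn V (p e) y) : ∃ e', p e' = y ∧ JoinedIn (p ⁻¹' V) e e' := by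
  obtain ⟨γ, hγ⟩ := h
  obtain ⟨Γ, hΓ⟩ := hp.exists_lift γ rfl
  exact ⟨_, hp.p_liftEnd γ rfl, Γ, fun t => by simpa [Set.mem_preimage, hΓ] using hγ t⟩

theorem surjective (hp : IsSemicoveringMap p) [PathConnectedSpace X] [Nonempty E] :
    Function.Surjective p := fun x =>
  let e := Classical.arbitrary E
  ⟨_, hp.p_liftEnd (PathConnectedSpace.somePath (p e) x) rfl⟩

/-- The sheets over `V` are the path components of `p ⁻¹' V`. -/
theorem isEvenlyCovered_of_joinedIn_eq (hp : IsSemicoveringMap p) [LocallyPathConnectedSpace E]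
    {V : Set X} (hV : IsOpen V) (hVpc : IsPathConnected V) (hx : x ∈ V) (hxp : x ∈ Set.range p)
    (hinj : ∀ e₁ e₂, JoinedIn (p ⁻¹' V) e₁ e₂ → p e₁ = p e₂ → e₁ = e₂) :
    IsEvenlyCovered p x (p ⁻¹' {x}) := by
  obtain ⟨e, rfl⟩ := hxp
  have : Nonempty (X → E) := ⟨fun _ => e⟩
  have : Nonempty (p ⁻¹' {p e}) := ⟨⟨e, rfl⟩⟩
  have : DiscreteTopology (p ⁻¹' {p e}) :=
    (IsDiscrete.of_openPartialHomeomorph p subset_rfl fun e _ =>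
      (hp.isLocalHomeomorph e).imp fun _ h => ⟨h.1, h.2.symm⟩).1
  have hcont : Continuous p := hp.isLocalHomeomorph.continuous
  have hlift {e' : E} {v : X} (he' : p e' ∈ V) (hv : v ∈ V) :
      ∃ e'', p e'' = v ∧ JoinedIn (p ⁻¹' V) e' e'' :=
    hp.exists_joinedIn_preimage (hVpc.joinedIn _ he' v hv)
  have hsurj (i : p ⁻¹' {p e}) : Set.SurjOn p (pathComponentIn (p ⁻¹' V) i) V := fun v hv =>
    (hlift (by rwa [show p i = p e from i.2]) hv).imp fun _ h => ⟨h.2, h.1⟩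
  refine .of_trivialization (t := hV.trivializationDiscrete
    (fun i : p ⁻¹' {p e} => pathComponentIn (p ⁻¹' V) i) V
    (fun i W hWV => ⟨fun hW => ?_, fun hW => ?_⟩)
    (fun i e₁ h₁ e₂ h₂ h => hinj e₁ e₂ (h₁.symm.trans h₂) h) hsurj (fun i j hij => ?_) ?_) hx
  · exact (hW.preimage hcont).inter ((hV.preimage hcont).pathComponentIn _)
  · have himage : p '' (p ⁻¹' W ∩ pathComponentIn (p ⁻¹' V) i) = W := by
      rw [Set.image_preimage_inter]
      exact Set.inter_eq_left.2 (hWV.trans (hsurj i))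
    exact himage ▸ hp.isLocalHomeomorph.isOpenMap _ hW
  · exact Set.disjoint_left.2 fun e' hi hj =>
      hij (Subtype.ext (hinj _ _ (hi.trans hj.symm) (i.2.trans j.2.symm)))
  · intro e' he'
    obtain ⟨f, hf, hJ⟩ := hlift he' hx
    exact Set.mem_iUnion.2 ⟨⟨f, hf⟩, hJ.symm⟩

end IsSemicoveringMap

/-- `StrongHSLTAt x₀ H` asks for such a `V` at every `x`, for every open `U ∋ x₀`. -/
def IsSLTNeighborhood {x₀ : X} (H : Subgroup (FundamentalGroup X x₀)) (U V : Set X) (x : X) :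
    Prop :=
  ∀ β : Path x x, (∀ t, β t ∈ V) → ∀ α : Path x₀ x,
    ∃ lam : Path x₀ x₀, (∀ t, lam t ∈ U) ∧
      loopClass (α.trans (β.trans α.symm)) * (loopClass lam)⁻¹ ∈ H

theorem loopClass_conj_trans {x₀ x y : X} (α : Path x₀ y) (c : Path x y) (β : Path y y) :
    loopClass ((α.trans c.symm).trans ((c.trans (β.trans c.symm)).trans (α.trans c.symm).symm)) =
      loopClass (α.trans (β.trans α.symm)) := by
  simp [loopClass, ← Path.Homotopic.Quotient.trans_assoc (Path.Homotopic.Quotient.symm _)]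

theorem IsSLTNeighborhood.of_joinedIn {x₀ x y : X} {H : Subgroup (FundamentalGroup X x₀)}
    {U V : Set X} (h : IsSLTNeighborhood H U V x) (hxy : JoinedIn V x y) :
    IsSLTNeighborhood H U V y := by
  obtain ⟨c, hc⟩ := hxy
  intro β hβ α
  have hconj : ∀ t, (c.trans (β.trans c.symm)) t ∈ V := by
    simp only [← Set.range_subset_iff, Path.trans_range, Path.symm_range, Set.union_subset_iff]
    exact ⟨Set.range_subset_iff.2 hc, Set.range_subset_iff.2 hβ, Set.range_subset_iff.2 hc⟩
  obtain ⟨lam, hlam, hmem⟩ := h _ hconj (α.trans c.symm)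
  exact ⟨lam, hlam, loopClass_conj_trans α c β ▸ hmem⟩

theorem StrongHSLTAt.exists_isSLTNeighborhood [LocallyPathConnectedSpace X] {x₀ : X}
    {H : Subgroup (FundamentalGroup X x₀)} (hX : StrongHSLTAt x₀ H) (x : X) {U : Set X}
    (hU : IsOpen U) (hx₀ : x₀ ∈ U) :
    ∃ V, IsOpen V ∧ IsPathConnected V ∧ x ∈ V ∧ ∀ y ∈ V, IsSLTNeighborhood H U V y := by
  obtain ⟨V, hV, hxV, hSLT⟩ := hX x U hU hx₀
  have hVpc := isPathConnected_pathComponentIn hxV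
  have hSLTx : IsSLTNeighborhood H U (pathComponentIn V x) x := fun β hβ =>
    hSLT β fun t => pathComponentIn_subset (hβ t)
  exact ⟨_, hV.pathComponentIn x, hVpc, mem_pathComponentIn_self hxV, fun y hy =>
    hSLTx.of_joinedIn (hVpc.joinedIn x (mem_pathComponentIn_self hxV) y hy)⟩

namespace IsSemicoveringMap

variable {E : Type*} [TopologicalSpace E] {p : E → X}
variable {e₀ : E} {x₀ : X} {H : Subgroup (FundamentalGroup X x₀)}

theorem liftEnd_eq_self_of_loopClass_mem (hp : IsSemicoveringMap p) (hcont : Continuous p)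
    (he : p e₀ = x₀)
    (hH : ∀ g ∈ H, ∃ γ : Path e₀ e₀, loopClass ((γ.map hcont).cast he.symm he.symm) = g)
    {γ : Path x₀ x₀} (hγ : loopClass γ ∈ H) : hp.liftEnd γ e₀ = e₀ := by
  obtain ⟨Γ, hΓ⟩ := hH _ hγ
  rw [← hp.liftEnd_eq_of_homotopic (Quotient.exact hΓ) he]
  exact hp.liftEnd_eq Γ fun _ => rfl

theorem eq_of_joinedIn_of_isSLTNeighborhood (hp : IsSemicoveringMap p) [PathConnectedSpace E]
    (hcont : Continuous p) (he : p e₀ = x₀)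
    (hH : ∀ g ∈ H, ∃ γ : Path e₀ e₀, loopClass ((γ.map hcont).cast he.symm he.symm) = g)
    {U V : Set X} (hU : ∀ lam : Path x₀ x₀, (∀ t, lam t ∈ U) → hp.liftEnd lam e₀ = e₀)
    {e₁ e₂ : E} (hSLT : IsSLTNeighborhood H U V (p e₁)) (hJ : JoinedIn (p ⁻¹' V) e₁ e₂)
    (h : p e₁ = p e₂) : e₁ = e₂ := by
  obtain ⟨δ, hδ⟩ := hJ
  let α : Path x₀ (p e₁) := ((PathConnectedSpace.somePath e₀ e₁).map hcont).cast he.symm rfl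
  let β : Path (p e₁) (p e₁) := (δ.map hcont).cast rfl h
  have hα : hp.liftEnd α e₀ = e₁ := hp.liftEnd_eq _ fun _ => rfl
  have hβ : hp.liftEnd β e₁ = e₂ := hp.liftEnd_eq δ fun _ => rfl
  obtain ⟨lam, hlam, hmem⟩ := hSLT β hδ α
  have hclosed : hp.liftEnd (lam.symm.trans (α.trans (β.trans α.symm))) e₀ = e₀ :=
    hp.liftEnd_eq_self_of_loopClass_mem hcont he hH hmem
  refine hp.liftEnd_injOn α.symm rfl h.symm ?_
  calc hp.liftEnd α.symm e₁ = e₀ := by rw [← hp.liftEnd_symm_liftEnd α he, hα]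
    _ = hp.liftEnd (lam.symm.trans (α.trans (β.trans α.symm))) e₀ := hclosed.symm
    _ = hp.liftEnd α.symm e₂ := by
      rw [hp.liftEnd_trans _ _ he, hU lam.symm fun t => hlam _, hp.liftEnd_trans _ _ he, hα,
        hp.liftEnd_trans _ _ rfl, hβ]

end IsSemicoveringMap

theorem semicovering_isCoveringMap_of_strongHSLTAt
    {E X' : Type*} [TopologicalSpace E] [TopologicalSpace X']
    [ConnectedSpace X'] [LocallyPathConnectedSpace X']
    [ConnectedSpace E] [LocallyPathConnectedSpace E]
    (p : E → X') (hcont : Continuous p) (hp : IsSemicoveringMap p)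
    (e₀ : E) (x₀ : X') (he : p e₀ = x₀)
    (H : Subgroup (FundamentalGroup X' x₀))
    (hH : ∀ g, g ∈ H ↔ ∃ γ : Path e₀ e₀, loopClass ((γ.map hcont).cast he.symm he.symm) = g)
    (hX : StrongHSLTAt x₀ H) : IsCoveringMap p := by
  have : PathConnectedSpace X' := pathConnectedSpace_iff_connectedSpace.mpr ‹_›
  have : PathConnectedSpace E := pathConnectedSpace_iff_connectedSpace.mpr ‹_›
  obtain ⟨φ, he₀, hφ⟩ := hp.isLocalHomeomorph e₀
  have hx₀ : x₀ ∈ φ.target := he ▸ hφ ▸ φ.map_source he₀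
  have hU (lam : Path x₀ x₀) (hlam : ∀ t, lam t ∈ φ.target) : hp.liftEnd lam e₀ = e₀ := by
    rw [hp.liftEnd_eq_symm_of_forall_mem_target hφ he₀ he hlam, ← he, hφ, φ.left_inv he₀]
  intro x
  obtain ⟨V, hV, hVpc, hxV, hSLT⟩ := hX.exists_isSLTNeighborhood x φ.open_target hx₀
  refine hp.isEvenlyCovered_of_joinedIn_eq hV hVpc hxV (hp.surjective x) fun e₁ e₂ hJ h => ?_
  exact hp.eq_of_joinedIn_of_isSLTNeighborhood hcont he (fun g => (hH g).1) hU
    (hSLT _ hJ.source_mem) hJ h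

end
end

section
/- Let H ≤ π₁^s(X,x₀) (the subgroup of small loops). If X is an H-SLT space at x₀, then π₁^s(X,x₀) equals the path Spanier group π̃₁^{sp}(X,x₀). -/
open CategoryTheory unitInterval
open scoped Topology

attribute [local instance] Path.Homotopic.setoid

noncomputable section

variable {X : Type*} [TopologicalSpace X]

/-- The set of classes of small loops at `x₀`: loops that, for every open neighborhood `U`
of `x₀`, are homotopic (rel endpoints) to a loop inside `U`. -/
def smallLoopSet (x₀ : X) : Set (FundamentalGroup X x₀) :=
  {g | ∀ U : Set X, IsOpen U → x₀ ∈ U →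
    ∃ γ : Path x₀ x₀, (∀ t, γ t ∈ U) ∧ loopClass γ = g}

/-- A path open cover: a choice, for each path `α` from `x₀`, of an open neighborhood
of its endpoint `α(1)`. -/
def IsPathOpenCover (x₀ : X) (V : (Σ y : X, Path x₀ y) → Set X) : Prop :=
  ∀ a, IsOpen (V a) ∧ a.1 ∈ V a

/-- The path Spanier subgroup `π̃(𝒱, x₀)`, generated by `[α∗β∗α⁻¹]` with `β` a loop
in `V_α`. -/
def pathSpanierSub (x₀ : X) (V : (Σ y : X, Path x₀ y) → Set X) :
    Subgroup (FundamentalGroup X x₀) :=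
  Subgroup.closure {g | ∃ (y : X) (α : Path x₀ y) (β : Path y y),
    (∀ t, β t ∈ V ⟨y, α⟩) ∧ g = loopClass (α.trans (β.trans α.symm))}

/-- The path Spanier group `π̃₁^{sp}(X, x₀)`: the intersection of all path Spanier
subgroups over path open covers. -/
def pathSpanierWhole (x₀ : X) : Subgroup (FundamentalGroup X x₀) :=
  ⨅ (V : (Σ y : X, Path x₀ y) → Set X) (_ : IsPathOpenCover x₀ V), pathSpanierSub x₀ V

/-- The Spanier group `π₁^{sp}(X, x₀)`: the intersection of the Spanier subgroups over all
open covers of `X`. -/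
def spanierWhole (x₀ : X) : Subgroup (FundamentalGroup X x₀) :=
  ⨅ (𝒰 : Set (Set X)) (_ : IsOpenCover 𝒰), spanierGroupAt x₀ 𝒰

/-- `X` is an `H`-SLT space at `x₀`. -/
def HSLTAt (x₀ : X) (H : Subgroup (FundamentalGroup X x₀)) : Prop :=
  ∀ (y : X) (α : Path x₀ y), ∃ V : Set X, IsOpen V ∧ y ∈ V ∧
    ∀ (β : Path y y), (∀ t, β t ∈ V) → ∀ (U : Set X), IsOpen U → x₀ ∈ U →
      ∃ lam : Path x₀ x₀, (∀ t, lam t ∈ U) ∧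
        loopClass (α.trans (β.trans α.symm)) * (loopClass lam)⁻¹ ∈ H

theorem loopClass_trans {x : X} (γ δ : Path x x) :
    loopClass (γ.trans δ) = loopClass δ * loopClass γ :=
  rfl

theorem loopClass_refl (x : X) : loopClass (Path.refl x) = 1 :=
  rfl

theorem loopClass_symm {x : X} (γ : Path x x) : loopClass γ.symm = (loopClass γ)⁻¹ := by
  refine eq_inv_of_mul_eq_one_left ?_
  rw [← loopClass_trans, ← loopClass_refl]
  exact Quotient.sound ⟨(Path.Homotopy.reflTransSymm γ).symm⟩

theorem loopClass_refl_conj {x : X} (β : Path x x) :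
    loopClass ((Path.refl x).trans (β.trans (Path.refl x).symm)) = loopClass β := by
  rw [loopClass_trans, loopClass_trans, Path.refl_symm, loopClass_refl, mul_one, one_mul]

theorem forall_trans_mem {x y z : X} {U : Set X} {γ : Path x y} {δ : Path y z}
    (hγ : ∀ t, γ t ∈ U) (hδ : ∀ t, δ t ∈ U) (t : I) : γ.trans δ t ∈ U := by
  rw [Path.trans_apply]
  split_ifs
  exacts [hγ _, hδ _]

def loopsWithin (x₀ : X) (U : Set X) (hU : x₀ ∈ U) : Subgroup (FundamentalGroup X x₀) where
  carrier := {g | ∃ γ : Path x₀ x₀, (∀ t, γ t ∈ U) ∧ loopClass γ = g}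
  one_mem' := ⟨Path.refl x₀, fun _ => hU, loopClass_refl x₀⟩
  mul_mem' := by
    rintro _ _ ⟨γ, hγ, rfl⟩ ⟨δ, hδ, rfl⟩
    exact ⟨δ.trans γ, forall_trans_mem hδ hγ, loopClass_trans δ γ⟩
  inv_mem' := by
    rintro _ ⟨γ, hγ, rfl⟩
    exact ⟨γ.symm, fun t => hγ _, loopClass_symm γ⟩

theorem smallLoopSet_subset_pathSpanierSub {x₀ : X} {V : (Σ y : X, Path x₀ y) → Set X}
    (hV : IsPathOpenCover x₀ V) : smallLoopSet x₀ ⊆ pathSpanierSub x₀ V := by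
  intro g hg
  obtain ⟨γ, hγV, rfl⟩ := hg _ (hV ⟨x₀, Path.refl x₀⟩).1 (hV ⟨x₀, Path.refl x₀⟩).2
  exact Subgroup.subset_closure ⟨x₀, Path.refl x₀, γ, hγV, (loopClass_refl_conj γ).symm⟩

theorem smallLoopSet_subset_pathSpanierWhole (x₀ : X) :
    smallLoopSet x₀ ⊆ pathSpanierWhole x₀ := fun _ hg =>
  Subgroup.mem_iInf.2 fun _ => Subgroup.mem_iInf.2 fun hV => smallLoopSet_subset_pathSpanierSub hV hg

/-- Each generator `[α∗β∗α⁻¹]` is its `H`-part times the class of a loop `λ` in `U`. -/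
theorem pathSpanierSub_le_loopsWithin {x₀ : X} {H : Subgroup (FundamentalGroup X x₀)}
    {U : Set X} (hU : x₀ ∈ U) (hHU : H ≤ loopsWithin x₀ U hU) {V : (Σ y : X, Path x₀ y) → Set X}
    (hV : ∀ (a : Σ y : X, Path x₀ y) (β : Path a.1 a.1), (∀ t, β t ∈ V a) →
      ∃ lam : Path x₀ x₀, (∀ t, lam t ∈ U) ∧
        loopClass (a.2.trans (β.trans a.2.symm)) * (loopClass lam)⁻¹ ∈ H) :
    pathSpanierSub x₀ V ≤ loopsWithin x₀ U hU := by
  refine (Subgroup.closure_le _).2 ?_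
  rintro _ ⟨y, α, β, hβ, rfl⟩
  obtain ⟨lam, hlam, hH⟩ := hV ⟨y, α⟩ β hβ
  rw [← inv_mul_cancel_right (loopClass (α.trans (β.trans α.symm))) (loopClass lam)]
  exact mul_mem (hHU hH) ⟨lam, hlam, rfl⟩

theorem smallLoopSet_eq_pathSpanier_of_HSLT
    {x₀ : X} (H : Subgroup (FundamentalGroup X x₀))
    (hH : (H : Set (FundamentalGroup X x₀)) ⊆ smallLoopSet x₀)
    (hSLT : HSLTAt x₀ H) :
    smallLoopSet x₀ = (pathSpanierWhole x₀ : Set (FundamentalGroup X x₀)) := by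
  refine (smallLoopSet_subset_pathSpanierWhole x₀).antisymm fun g hg U hUo hUm => ?_
  choose V hVo hVm hVH using fun a : (Σ y : X, Path x₀ y) => hSLT a.1 a.2
  have hcover : IsPathOpenCover x₀ V := fun a => ⟨hVo a, hVm a⟩
  have hle : pathSpanierSub x₀ V ≤ loopsWithin x₀ U hUm :=
    pathSpanierSub_le_loopsWithin hUm (fun _ hh => hH hh U hUo hUm)
      fun a β hβ => hVH a β hβ U hUo hUm
  exact hle (iInf₂_le (f := fun V _ => pathSpanierSub x₀ V) V hcover hg)

end
end

section
/- Let H be a normal subgroup of π₁(X,x₀) and X a locally path connected strong H-SLT space at x₀. Then the endpoint projection p_H : X̃_H^{wh} → X has the unique path lifting property if and only if p_H : X̃_H^{l} → X has the unique path lifting property. -/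
open CategoryTheory unitInterval
open scoped Topology

attribute [local instance] Path.Homotopic.setoid

noncomputable section

variable {X : Type*} [TopologicalSpace X]

/-- The relation on paths from `x₀`: `α ∼ β` iff they share the endpoint and
`[α∗β⁻¹] ∈ K`. -/
def hrel {x₀ : X} (K : Subgroup (FundamentalGroup X x₀)) :
    (Σ y : X, Path x₀ y) → (Σ y : X, Path x₀ y) → Prop :=
  fun a b => ∃ h : a.1 = b.1, loopClass (a.2.trans ((b.2.cast rfl h).symm)) ∈ K

/-- The set `X̃_K` of `K`-classes of paths emanating from `x₀`. -/
def Xtilde (x₀ : X) (K : Subgroup (FundamentalGroup X x₀)) := Quot (hrel K)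

/-- The whisker topology on `X̃_K`, with basic open sets `B_K([α], U)`. -/
def whiskerTop (x₀ : X) (K : Subgroup (FundamentalGroup X x₀)) :
    TopologicalSpace (Xtilde x₀ K) :=
  TopologicalSpace.generateFrom
    {S | ∃ (y : X) (α : Path x₀ y) (U : Set X), IsOpen U ∧ y ∈ U ∧
      S = {q | ∃ (z : X) (lam : Path y z), (∀ t, lam t ∈ U) ∧
            q = Quot.mk _ ⟨z, α.trans lam⟩}}

/-- The lasso topology on `X̃_K`, with basic open sets `B_K([α], 𝒰, U)`. -/
def lassoTop (x₀ : X) (K : Subgroup (FundamentalGroup X x₀)) :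
    TopologicalSpace (Xtilde x₀ K) :=
  TopologicalSpace.generateFrom
    {S | ∃ (y : X) (α : Path x₀ y) (𝒰 : Set (Set X)) (U : Set X),
      IsOpenCover 𝒰 ∧ U ∈ 𝒰 ∧ y ∈ U ∧
      S = {q | ∃ (γ : Path y y) (z : X) (δ : Path y z),
            loopClass γ ∈ spanierGroupAt y 𝒰 ∧ (∀ t, δ t ∈ U) ∧
            q = Quot.mk _ ⟨z, (α.trans γ).trans δ⟩}}

/-- The endpoint projection `p_K : X̃_K → X`, `[α]_K ↦ α(1)`. -/
def endpointMap (x₀ : X) (K : Subgroup (FundamentalGroup X x₀)) : Xtilde x₀ K → X :=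
  Quot.lift Sigma.fst (fun _ _ h => h.1)

/-- `f` has the unique path lifting property with respect to the topology `tA` on its domain:
any two continuous lifts of a path that agree at the start point are equal. -/
def HasUniquePathLifting {A B : Type*} (tA : TopologicalSpace A) [TopologicalSpace B]
    (f : A → B) : Prop :=
  ∀ γ₁ γ₂ : I → A, Continuous[inferInstance, tA] γ₁ → Continuous[inferInstance, tA] γ₂ →
    f ∘ γ₁ = f ∘ γ₂ → γ₁ 0 = γ₂ 0 → γ₁ = γ₂

/-!
Whisker-continuous paths are lasso-continuous, since every basic lasso neighbourhood is whisker
open; this gives one implication.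

For the other, fix an open `U ∋ x₀` and put `K = H ⊔ π₁(U, x₀)`. Strong `H`-SLT provides an open
cover `𝒰` whose Spanier group lies in `K`. On a basic lasso neighbourhood `B([α], 𝒰, V)` with
`V ∈ 𝒰` the `K`-class of a point depends only on its endpoint, so for two lasso-continuous lifts
of the same path the set of times at which their `K`-classes agree is open and closed, hence all
of `I`. Finally, whisker unique path lifting gives `⋂_U (H ⊔ π₁(U, x₀)) = H`: for `g` in the
intersection, every whisker neighbourhood of `[c_{x₀}]` contains `[g]`, so the path that sits at
`[c_{x₀}]` at time `0` and at `[g]` afterwards is a second whisker-continuous lift of the constant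
path.
-/

namespace Path

variable {x y z : X}

def toHom (p : Path x y) : FundamentalGroupoid.mk x ⟶ FundamentalGroupoid.mk y := ⟦p⟧

@[simp] theorem toHom_trans (p : Path x y) (q : Path y z) :
    (p.trans q).toHom = p.toHom ≫ q.toHom := rfl

@[simp] theorem toHom_symm (p : Path x y) : p.symm.toHom = CategoryTheory.inv p.toHom := by
  rw [← Groupoid.inv_eq_inv]; rfl

@[simp] theorem toHom_refl (x : X) : (Path.refl x).toHom = 𝟙 _ := rfl

theorem toHom_eq_of_homotopic {p q : Path x y} (h : p.Homotopic q) : p.toHom = q.toHom :=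
  Quotient.sound h

theorem trans_mem {p : Path x y} {q : Path y z} {U : Set X} (hp : ∀ t, p t ∈ U)
    (hq : ∀ t, q t ∈ U) (t : I) : p.trans q t ∈ U := by
  rw [Path.trans_apply]
  split
  exacts [hp _, hq _]

theorem symm_mem {p : Path x y} {U : Set X} (hp : ∀ t, p t ∈ U) (t : I) : p.symm t ∈ U :=
  hp _

end Path

theorem loopClass_eq_toHom {x : X} (γ : Path x x) : loopClass γ = γ.toHom := rfl

namespace FundamentalGroup

variable {x y : X}

theorem inv_eq_inv (a : FundamentalGroup X x) :
    a⁻¹ = CategoryTheory.inv (show FundamentalGroupoid.mk x ⟶ _ from a) :=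
  Groupoid.inv_eq_inv _

theorem fundamentalGroupMulEquivOfPath_symm_apply (u : Path x y) (g : FundamentalGroup X y) :
    fundamentalGroupMulEquivOfPath u.symm g = u.toHom ≫ g ≫ CategoryTheory.inv u.toHom := by
  rw [fundamentalGroupMulEquivOfPath, Iso.conj_apply]
  change Groupoid.inv u.symm.toHom ≫ g ≫ u.symm.toHom = _
  simp [Groupoid.inv_eq_inv]

end FundamentalGroup

open FundamentalGroup

namespace Path

variable {x₀ y z : X}

def diffClass (u v : Path x₀ y) : FundamentalGroup X x₀ := loopClass (u.trans v.symm)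

@[simp] theorem diffClass_self (u : Path x₀ y) : u.diffClass u = 1 := by
  simp [diffClass, loopClass_eq_toHom]

theorem inv_diffClass (u v : Path x₀ y) : (u.diffClass v)⁻¹ = v.diffClass u := by
  simp [diffClass, loopClass_eq_toHom, inv_eq_inv]

theorem diffClass_mul_diffClass (u v w : Path x₀ y) :
    v.diffClass w * u.diffClass v = u.diffClass w := by
  simp [diffClass, loopClass_eq_toHom]

@[simp] theorem diffClass_trans_trans (u v : Path x₀ y) (δ : Path y z) :
    (u.trans δ).diffClass (v.trans δ) = u.diffClass v := by
  simp [diffClass, loopClass_eq_toHom]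

theorem diffClass_refl_left (γ : Path x₀ x₀) : (Path.refl x₀).diffClass γ = (loopClass γ)⁻¹ := by
  simp [diffClass, loopClass_eq_toHom, inv_eq_inv]

end Path

namespace Xtilde

variable {x₀ : X} {K : Subgroup (FundamentalGroup X x₀)}

theorem hrel_mk_iff {y : X} {u v : Path x₀ y} : hrel K ⟨y, u⟩ ⟨y, v⟩ ↔ u.diffClass v ∈ K :=
  ⟨fun ⟨_, h⟩ => h, fun h => ⟨rfl, h⟩⟩

theorem hrel_equivalence (K : Subgroup (FundamentalGroup X x₀)) : Equivalence (hrel K) where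
  refl := fun ⟨_, u⟩ => hrel_mk_iff.2 (by simpa using K.one_mem)
  symm := by
    rintro ⟨_, u⟩ ⟨_, v⟩ ⟨e, h⟩
    cases e
    rw [hrel_mk_iff, ← Path.inv_diffClass]
    exact K.inv_mem h
  trans := by
    rintro ⟨_, u⟩ ⟨_, v⟩ ⟨_, w⟩ ⟨e₁, h₁⟩ ⟨e₂, h₂⟩
    cases e₁; cases e₂
    rw [hrel_mk_iff, ← Path.diffClass_mul_diffClass u v w]
    exact K.mul_mem h₂ h₁

def mk {y : X} (u : Path x₀ y) : Xtilde x₀ K := Quot.mk _ ⟨y, u⟩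

theorem mk_eq_mk_iff {y : X} {u v : Path x₀ y} :
    (mk u : Xtilde x₀ K) = mk v ↔ u.diffClass v ∈ K :=
  Quot.eq.trans ((Equivalence.eqvGen_iff (hrel_equivalence K)).trans hrel_mk_iff)

theorem mk_eq_mk_of_homotopic {y : X} {u v : Path x₀ y} (h : u.Homotopic v) :
    (mk u : Xtilde x₀ K) = mk v := by
  have : u.diffClass v = 1 := by
    simp [Path.diffClass, loopClass_eq_toHom, Path.toHom_eq_of_homotopic h]
  rw [mk_eq_mk_iff, this]
  exact K.one_mem

theorem mk_trans_eq_mk_trans_iff {y z : X} {u v : Path x₀ y} (δ : Path y z) :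
    (mk (u.trans δ) : Xtilde x₀ K) = mk (v.trans δ) ↔ (mk u : Xtilde x₀ K) = mk v := by
  simp only [mk_eq_mk_iff, Path.diffClass_trans_trans]

theorem exists_eq_mk (a : Xtilde x₀ K) : ∃ (y : X) (u : Path x₀ y), a = mk u :=
  let ⟨⟨y, u⟩, h⟩ := Quot.exists_rep a
  ⟨y, u, h.symm⟩

@[simp] theorem endpointMap_mk {y : X} (u : Path x₀ y) : endpointMap x₀ K (mk u) = y := rfl

def map {H : Subgroup (FundamentalGroup X x₀)} (hHK : H ≤ K) : Xtilde x₀ H → Xtilde x₀ K :=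
  Quot.map id fun _ _ h => ⟨h.1, hHK h.2⟩

@[simp] theorem map_mk {H : Subgroup (FundamentalGroup X x₀)} (hHK : H ≤ K) {y : X}
    (u : Path x₀ y) : map hHK (mk u) = mk u := rfl

def whiskerBasic {y : X} (α : Path x₀ y) (U : Set X) : Set (Xtilde x₀ K) :=
  {q | ∃ (z : X) (lam : Path y z), (∀ t, lam t ∈ U) ∧ q = mk (α.trans lam)}

def lassoBasic {y : X} (α : Path x₀ y) (𝒰 : Set (Set X)) (U : Set X) : Set (Xtilde x₀ K) :=
  {q | ∃ (γ : Path y y) (z : X) (δ : Path y z),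
    loopClass γ ∈ spanierGroupAt y 𝒰 ∧ (∀ t, δ t ∈ U) ∧ q = mk ((α.trans γ).trans δ)}

variable {y : X} (α : Path x₀ y) {U : Set X}

theorem isOpen_whiskerBasic (hU : IsOpen U) (hy : y ∈ U) :
    IsOpen[whiskerTop x₀ K] (whiskerBasic α U) :=
  TopologicalSpace.isOpen_generateFrom_of_mem ⟨y, α, U, hU, hy, rfl⟩

theorem mk_mem_whiskerBasic (hy : y ∈ U) : mk α ∈ whiskerBasic (K := K) α U :=
  ⟨y, Path.refl y, fun _ => hy, (mk_eq_mk_of_homotopic ⟨Path.Homotopy.transRefl α⟩).symm⟩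

theorem isOpen_lassoBasic {𝒰 : Set (Set X)} (h𝒰 : IsOpenCover 𝒰) (hU : U ∈ 𝒰) (hy : y ∈ U) :
    IsOpen[lassoTop x₀ K] (lassoBasic α 𝒰 U) :=
  TopologicalSpace.isOpen_generateFrom_of_mem ⟨y, α, 𝒰, U, h𝒰, hU, hy, rfl⟩

theorem mk_trans_mem_lassoBasic (𝒰 : Set (Set X)) {z : X} {δ : Path y z} (hδ : ∀ t, δ t ∈ U) :
    mk (α.trans δ) ∈ lassoBasic (K := K) α 𝒰 U :=
  ⟨Path.refl y, z, δ, by simpa [loopClass_eq_toHom] using (spanierGroupAt y 𝒰).one_mem, hδ,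
    mk_eq_mk_of_homotopic ⟨(Path.Homotopy.transRefl α).symm.hcomp (.refl δ)⟩⟩

theorem mk_mem_lassoBasic (𝒰 : Set (Set X)) (hy : y ∈ U) :
    mk α ∈ lassoBasic (K := K) α 𝒰 U := by
  rw [mk_eq_mk_of_homotopic ⟨(Path.Homotopy.transRefl α).symm⟩]
  exact mk_trans_mem_lassoBasic α 𝒰 fun _ => hy

theorem isOpen_whiskerTop_lassoBasic {𝒰 : Set (Set X)} (h𝒰 : IsOpenCover 𝒰) (hU : U ∈ 𝒰) :
    IsOpen[whiskerTop x₀ K] (lassoBasic α 𝒰 U) := by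
  let := whiskerTop x₀ K
  refine isOpen_iff_forall_mem_open.2 ?_
  rintro _ ⟨γ, z, δ, hγ, hδ, rfl⟩
  have hz : z ∈ U := δ.target ▸ hδ 1
  refine ⟨_, ?_, isOpen_whiskerBasic _ (h𝒰.1 U hU) hz, mk_mem_whiskerBasic _ hz⟩
  rintro _ ⟨w, lam, hlam, rfl⟩
  exact ⟨γ, w, δ.trans lam, hγ, Path.trans_mem hδ hlam,
    mk_eq_mk_of_homotopic ⟨.transAssoc _ _ _⟩⟩

end Xtilde

theorem whiskerTop_le_lassoTop (x₀ : X) (K : Subgroup (FundamentalGroup X x₀)) :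
    whiskerTop x₀ K ≤ lassoTop x₀ K := by
  refine TopologicalSpace.le_generateFrom_iff_subset_isOpen.2 ?_
  rintro _ ⟨y, α, 𝒰, U, h𝒰, hU, -, rfl⟩
  exact Xtilde.isOpen_whiskerTop_lassoBasic α h𝒰 hU

theorem HasUniquePathLifting.mono {A B : Type*} {t₁ t₂ : TopologicalSpace A} [TopologicalSpace B]
    {f : A → B} (ht : t₁ ≤ t₂) (hf : HasUniquePathLifting t₂ f) : HasUniquePathLifting t₁ f :=
  fun γ₁ γ₂ h₁ h₂ => hf γ₁ γ₂ (continuous_le_rng ht h₁) (continuous_le_rng ht h₂)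

section Spanier

variable {x y : X} {𝒰 : Set (Set X)} {U : Set X}

theorem loopClass_mem_spanierGroupAt_s15 (hU : U ∈ 𝒰) {β : Path x x} (hβ : ∀ t, β t ∈ U) :
    loopClass β ∈ spanierGroupAt x 𝒰 := by
  have h : loopClass ((Path.refl x).trans (β.trans (Path.refl x).symm)) ∈ spanierGroupAt x 𝒰 :=
    Subgroup.subset_closure ⟨x, Path.refl x, β, U, hU, hβ, rfl⟩
  simpa [loopClass_eq_toHom] using h

theorem fundamentalGroupMulEquivOfPath_symm_mem_spanierGroupAt (u : Path x y)
    {g : FundamentalGroup X y} (hg : g ∈ spanierGroupAt y 𝒰) :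
    fundamentalGroupMulEquivOfPath u.symm g ∈ spanierGroupAt x 𝒰 := by
  refine (Subgroup.closure_le (K := (spanierGroupAt x 𝒰).comap
    (fundamentalGroupMulEquivOfPath u.symm).toMonoidHom)).2 ?_ hg
  rintro _ ⟨z, τ, β, V, hV, hβ, rfl⟩
  have h : loopClass ((u.trans τ).trans (β.trans (u.trans τ).symm)) ∈ spanierGroupAt x 𝒰 :=
    Subgroup.subset_closure ⟨z, u.trans τ, β, V, hV, hβ, rfl⟩
  simpa [fundamentalGroupMulEquivOfPath_symm_apply, loopClass_eq_toHom] using h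

end Spanier

/-- The image of `π₁(U, x₀)` in `π₁(X, x₀)`. -/
def loopSubgroup {x₀ : X} {U : Set X} (h₀ : x₀ ∈ U) : Subgroup (FundamentalGroup X x₀) where
  carrier := {g | ∃ lam : Path x₀ x₀, (∀ t, lam t ∈ U) ∧ loopClass lam = g}
  one_mem' := ⟨Path.refl x₀, fun _ => h₀, rfl⟩
  mul_mem' := by
    rintro _ _ ⟨p, hp, rfl⟩ ⟨q, hq, rfl⟩
    exact ⟨q.trans p, Path.trans_mem hq hp, rfl⟩
  inv_mem' := by
    rintro _ ⟨p, hp, rfl⟩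
    exact ⟨p.symm, Path.symm_mem hp, rfl⟩

theorem StrongHSLTAt.exists_spanierGroupAt_le [LocallyPathConnectedSpace X] {x₀ : X}
    {H : Subgroup (FundamentalGroup X x₀)} (hSLT : StrongHSLTAt x₀ H) {U : Set X}
    (hU : IsOpen U) (h₀ : x₀ ∈ U) :
    ∃ 𝒰, IsOpenCover 𝒰 ∧ spanierGroupAt x₀ 𝒰 ≤ H ⊔ loopSubgroup h₀ := by
  choose V hV hxV hVH using fun x => hSLT x U hU h₀
  refine ⟨Set.range fun x => pathComponentIn (V x) x, ⟨?_, ?_⟩, ?_⟩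
  · rintro _ ⟨x, rfl⟩
    exact (hV x).pathComponentIn x
  · exact Set.eq_univ_of_forall fun x => ⟨_, ⟨x, rfl⟩, mem_pathComponentIn_self (hxV x)⟩
  rw [spanierGroupAt, Subgroup.closure_le]
  rintro _ ⟨y, α, β, _, ⟨x, rfl⟩, hβ, rfl⟩
  -- conjugate `β` back to a loop at `x` inside `V x`, where the SLT condition applies
  have hJ : JoinedIn (pathComponentIn (V x) x) x y :=
    (isPathConnected_pathComponentIn (hxV x)).joinedIn x (mem_pathComponentIn_self (hxV x)) y
      (β.source ▸ hβ 0)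
  set w := hJ.somePath
  have hβ' : ∀ t, w.trans (β.trans w.symm) t ∈ V x := fun t => pathComponentIn_subset <|
    Path.trans_mem hJ.somePath_mem (Path.trans_mem hβ (Path.symm_mem hJ.somePath_mem)) t
  obtain ⟨lam, hlam, hmem⟩ := hVH x _ hβ' (α.trans w.symm)
  have heq : loopClass (α.trans (β.trans α.symm)) =
      loopClass ((α.trans w.symm).trans ((w.trans (β.trans w.symm)).trans (α.trans w.symm).symm)) *
        (loopClass lam)⁻¹ * loopClass lam := by
    simp [loopClass_eq_toHom, inv_eq_inv]
  rw [SetLike.mem_coe, heq]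
  exact Subgroup.mul_mem_sup hmem ⟨lam, hlam, rfl⟩

theorem TopologicalSpace.specializes_generateFrom {α : Type*} {g : Set (Set α)} {a b : α}
    (h : ∀ s ∈ g, b ∈ s → a ∈ s) : @Specializes α (generateFrom g) a b := by
  let := generateFrom g
  rw [Specializes, nhds_generateFrom (a := b)]
  exact le_iInf₂ fun s ⟨hb, hs⟩ => Filter.le_principal_iff.2 <|
    (isOpen_generateFrom_of_mem hs).mem_nhds (h s hs hb)

theorem continuous_ite_eq_of_specializes {α β : Type*} [TopologicalSpace α] [T1Space α]
    [DecidableEq α] [TopologicalSpace β] {a b : β} (h : b ⤳ a) (x : α) :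
    Continuous fun t => if t = x then a else b := by
  refine continuous_def.2 fun s hs => ?_
  by_cases ha : a ∈ s <;> by_cases hb : b ∈ s
  · convert isOpen_univ
    ext t; by_cases ht : t = x <;> simp [ht, ha, hb]
  · exact absurd (h.mem_open hs ha) hb
  · convert isOpen_compl_singleton (x := x)
    ext t; by_cases ht : t = x <;> simp [ht, ha, hb]
  · convert isOpen_empty
    ext t; by_cases ht : t = x <;> simp [ht, ha, hb]

theorem HasUniquePathLifting.eq_of_specializes {A B : Type*} {tA : TopologicalSpace A}
    [TopologicalSpace B] {f : A → B} (hf : HasUniquePathLifting tA f) {a b : A}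
    (hba : @Specializes A tA b a) (hab : f a = f b) : a = b := by
  classical
  let := tA
  have := hf (fun _ => a) (fun t => if t = 0 then a else b) continuous_const
    (continuous_ite_eq_of_specializes hba 0)
    (funext fun t => by by_cases ht : t = 0 <;> simp [ht, hab]) (by simp)
  simpa using congrFun this 1

section Whisker

variable {x₀ : X} {H : Subgroup (FundamentalGroup X x₀)}

theorem Xtilde.mk_specializes_mk_refl (hN : H.Normal) {Γ : Path x₀ x₀}
    (hΓ : ∀ U, IsOpen U → ∀ h₀ : x₀ ∈ U, loopClass Γ ∈ H ⊔ loopSubgroup h₀) :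
    @Specializes (Xtilde x₀ H) (whiskerTop x₀ H) (mk Γ) (mk (Path.refl x₀)) := by
  refine TopologicalSpace.specializes_generateFrom ?_
  rintro _ ⟨y, α, U, hU, -, rfl⟩ ⟨z, lam, hlam, heq⟩
  obtain rfl : x₀ = z := congrArg (endpointMap x₀ H) heq
  have h₀ : x₀ ∈ U := lam.target ▸ hlam 1
  obtain ⟨h, hh, _, ⟨Λ, hΛ, rfl⟩, hΓΛ⟩ :=
    (@Subgroup.mem_sup_of_normal_left _ _ _ _ hN _).1 (hΓ U hU h₀)
  refine ⟨x₀, lam.trans Λ, Path.trans_mem hlam hΛ, mk_eq_mk_iff.2 ?_⟩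
  have hΓ' : Γ.toHom = Λ.toHom ≫ h := hΓΛ.symm
  have : Γ.diffClass (α.trans (lam.trans Λ)) =
      (Path.refl x₀).diffClass (α.trans lam) * ((loopClass Λ)⁻¹ * h * loopClass Λ) := by
    simp [Path.diffClass, loopClass_eq_toHom, inv_eq_inv, hΓ']
  rw [this]
  exact H.mul_mem (mk_eq_mk_iff.1 heq) (hN.conj_mem' h hh _)

theorem HasUniquePathLifting.mem_of_forall_mem_sup_loopSubgroup (hN : H.Normal)
    (hUPL : HasUniquePathLifting (whiskerTop x₀ H) (endpointMap x₀ H)) {g : FundamentalGroup X x₀}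
    (hg : ∀ U, IsOpen U → ∀ h₀ : x₀ ∈ U, g ∈ H ⊔ loopSubgroup h₀) : g ∈ H := by
  obtain ⟨Γ, rfl⟩ : ∃ Γ : Path x₀ x₀, loopClass Γ = g := Quotient.exists_rep g
  have := hUPL.eq_of_specializes (Xtilde.mk_specializes_mk_refl hN hg) rfl
  rw [Xtilde.mk_eq_mk_iff, Path.diffClass_refl_left] at this
  exact inv_mem_iff.1 this

theorem HasUniquePathLifting.eq_of_forall_map_eq (hN : H.Normal)
    (hUPL : HasUniquePathLifting (whiskerTop x₀ H) (endpointMap x₀ H)) {a b : Xtilde x₀ H}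
    (hab : endpointMap x₀ H a = endpointMap x₀ H b)
    (h : ∀ U, IsOpen U → ∀ h₀ : x₀ ∈ U,
      Xtilde.map (le_sup_left : H ≤ H ⊔ loopSubgroup h₀) a = Xtilde.map le_sup_left b) :
    a = b := by
  obtain ⟨y, u, rfl⟩ := Xtilde.exists_eq_mk a
  obtain ⟨_, v, rfl⟩ := Xtilde.exists_eq_mk b
  obtain rfl : y = _ := hab
  refine Xtilde.mk_eq_mk_iff.2 (hUPL.mem_of_forall_mem_sup_loopSubgroup hN fun U hU h₀ => ?_)
  simpa only [Xtilde.map_mk, Xtilde.mk_eq_mk_iff] using h U hU h₀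

end Whisker

section Lasso

variable {x₀ : X} {H K : Subgroup (FundamentalGroup X x₀)} {𝒰 : Set (Set X)}

theorem Xtilde.map_eq_map_of_mem_lassoBasic (hK : spanierGroupAt x₀ 𝒰 ≤ K) (hHK : H ≤ K)
    {U : Set X} (hU : U ∈ 𝒰) {y : X} {α : Path x₀ y} {a b : Xtilde x₀ H}
    (ha : a ∈ lassoBasic α 𝒰 U) (hb : b ∈ lassoBasic α 𝒰 U)
    (hab : endpointMap x₀ H a = endpointMap x₀ H b) : map hHK a = map hHK b := by
  obtain ⟨γ₁, z, δ₁, hγ₁, hδ₁, rfl⟩ := ha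
  obtain ⟨γ₂, _, δ₂, hγ₂, hδ₂, rfl⟩ := hb
  obtain rfl : z = _ := hab
  have hδ : loopClass (δ₁.trans δ₂.symm) ∈ spanierGroupAt y 𝒰 :=
    loopClass_mem_spanierGroupAt_s15 hU (Path.trans_mem hδ₁ (Path.symm_mem hδ₂))
  have : ((α.trans γ₁).trans δ₁).diffClass ((α.trans γ₂).trans δ₂) =
      fundamentalGroupMulEquivOfPath α.symm
        ((loopClass γ₂)⁻¹ * loopClass (δ₁.trans δ₂.symm) * loopClass γ₁) := by
    simp [Path.diffClass, loopClass_eq_toHom, fundamentalGroupMulEquivOfPath_symm_apply,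
      inv_eq_inv]
  rw [map_mk, map_mk, mk_eq_mk_iff, this]
  exact hK <| fundamentalGroupMulEquivOfPath_symm_mem_spanierGroupAt α <|
    mul_mem (mul_mem (inv_mem hγ₂) hδ) hγ₁

theorem Xtilde.eventually_map_eq_iff (h𝒰 : IsOpenCover 𝒰) (hK : spanierGroupAt x₀ 𝒰 ≤ K)
    (hHK : H ≤ K) {a b : Xtilde x₀ H} (hab : endpointMap x₀ H a = endpointMap x₀ H b) :
    ∀ᶠ p in @nhds _ (lassoTop x₀ H) a ×ˢ @nhds _ (lassoTop x₀ H) b,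
      endpointMap x₀ H p.1 = endpointMap x₀ H p.2 →
        (map hHK p.1 = map hHK p.2 ↔ map hHK a = map hHK b) := by
  let := lassoTop x₀ H
  obtain ⟨y, u, rfl⟩ := exists_eq_mk a
  obtain ⟨_, v, rfl⟩ := exists_eq_mk b
  obtain rfl : y = _ := hab
  obtain ⟨V, hV, hyV⟩ : ∃ V ∈ 𝒰, y ∈ V := Set.mem_sUnion.1 (h𝒰.2 ▸ Set.mem_univ y)
  have hu := (isOpen_lassoBasic (K := H) u h𝒰 hV hyV).mem_nhds (mk_mem_lassoBasic u 𝒰 hyV)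
  have hv := (isOpen_lassoBasic (K := H) v h𝒰 hV hyV).mem_nhds (mk_mem_lassoBasic v 𝒰 hyV)
  filter_upwards [Filter.prod_mem_prod hu hv]
  rintro ⟨a', b'⟩ ⟨ha', hb'⟩ hab'
  obtain ⟨γ, z, δ, -, hδ, hz⟩ := id ha'
  obtain rfl : endpointMap x₀ H a' = z := congrArg (endpointMap x₀ H) hz
  -- both points are `K`-equivalent to the whiskers `[u δ]` and `[v δ]`
  rw [map_eq_map_of_mem_lassoBasic hK hHK hV ha' (mk_trans_mem_lassoBasic u 𝒰 hδ) rfl,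
    map_eq_map_of_mem_lassoBasic hK hHK hV hb' (mk_trans_mem_lassoBasic v 𝒰 hδ) hab'.symm]
  simp only [map_mk]
  exact mk_trans_eq_mk_trans_iff δ

theorem Xtilde.map_comp_eq_of_continuous (h𝒰 : IsOpenCover 𝒰) (hK : spanierGroupAt x₀ 𝒰 ≤ K)
    (hHK : H ≤ K) {γ₁ γ₂ : I → Xtilde x₀ H} (hc₁ : Continuous[_, lassoTop x₀ H] γ₁)
    (hc₂ : Continuous[_, lassoTop x₀ H] γ₂)
    (hpr : endpointMap x₀ H ∘ γ₁ = endpointMap x₀ H ∘ γ₂) (h0 : γ₁ 0 = γ₂ 0) :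
    map hHK ∘ γ₁ = map hHK ∘ γ₂ := by
  let := lassoTop x₀ H
  have hloc : IsLocallyConstant fun t => map hHK (γ₁ t) = map hHK (γ₂ t) := by
    refine (IsLocallyConstant.iff_eventually_eq _).2 fun t => ?_
    have hγ := (hc₁.prodMk hc₂).tendsto t
    rw [nhds_prod_eq] at hγ
    filter_upwards [hγ.eventually (eventually_map_eq_iff h𝒰 hK hHK (congrFun hpr t))] with s hs
    exact propext (hs (congrFun hpr s))
  funext t
  exact (hloc.apply_eq_of_preconnectedSpace t 0).mpr (congrArg _ h0)

end Lasso

theorem whisker_upl_iff_lasso_upl [LocallyPathConnectedSpace X]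
    (x₀ : X) (H : Subgroup (FundamentalGroup X x₀)) (hN : H.Normal)
    (hSLT : StrongHSLTAt x₀ H) :
    HasUniquePathLifting (whiskerTop x₀ H) (endpointMap x₀ H) ↔
      HasUniquePathLifting (lassoTop x₀ H) (endpointMap x₀ H) := by
  refine ⟨fun hUPL γ₁ γ₂ hc₁ hc₂ hpr h0 => funext fun t => ?_,
    fun hUPL => hUPL.mono (whiskerTop_le_lassoTop x₀ H)⟩
  refine hUPL.eq_of_forall_map_eq hN (congrFun hpr t) fun U hU h₀ => ?_
  obtain ⟨𝒰, h𝒰, hK⟩ := hSLT.exists_spanierGroupAt_le hU h₀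
  exact congrFun (Xtilde.map_comp_eq_of_continuous h𝒰 hK le_sup_left hc₁ hc₂ hpr h0) t

end
end

section
/- If p : X̃ → X is a semicovering map and X is a strong SLT space, then X̃ is a strong SLT space. -/
open CategoryTheory unitInterval
open scoped Topology

attribute [local instance] Path.Homotopic.setoid

noncomputable section

variable {X : Type*} [TopologicalSpace X]

/-- `X` is a strong SLT space: for all points `x, y` and every open neighborhood `U` of `x`
there is an open neighborhood `V` of `y` such that every conjugate `α∗β∗α⁻¹` of a loop `β`
in `V` by a path `α` from `x` to `y` is path-homotopic to a loop `λ` in `U`. -/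
def StrongSLT (X : Type*) [TopologicalSpace X] : Prop :=
  ∀ (x y : X) (U : Set X), IsOpen U → x ∈ U →
    ∃ V : Set X, IsOpen V ∧ y ∈ V ∧
      ∀ (α : Path x y) (β : Path y y), (∀ t, β t ∈ V) →
        ∃ lam : Path x x, (∀ t, lam t ∈ U) ∧
          loopClass (α.trans (β.trans α.symm)) = loopClass lam

/-!
Given an open `U ∋ e₀`, shrink it to a sheet over which `p` is a homeomorphism onto an open
`W ∋ p e₀`. Strong SLT in `X` for `W` gives `V`; for a loop `β` in `p⁻¹(V)` the image of
`α∗β∗α⁻¹` is homotopic to a loop in `W`, whose lift through the sheet is a loop in `U`. The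
two loops upstairs are homotopic because lifting homotopies makes `p` injective on
path-homotopy classes.
-/

lemma loopClass_eq_loopClass_iff {x : X} (γ₁ γ₂ : Path x x) :
    loopClass γ₁ = loopClass γ₂ ↔ γ₁.Homotopic γ₂ :=
  ⟨Quotient.exact, fun h => Quotient.sound h⟩

lemma IsLocalHomeomorph.exists_nhds_forall_loop_lift {E : Type*} [TopologicalSpace E]
    {p : E → X} (hp : IsLocalHomeomorph p) {e₀ : E} {U : Set E} (hU : IsOpen U) (he₀ : e₀ ∈ U) :
    ∃ W : Set X, IsOpen W ∧ p e₀ ∈ W ∧ ∀ γ : Path (p e₀) (p e₀), (∀ t, γ t ∈ W) →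
      ∃ γ' : Path e₀ e₀, (∀ t, γ' t ∈ U) ∧ γ'.map hp.continuous = γ := by
  obtain ⟨c, hec, rfl⟩ := hp e₀
  set c' := c.restrOpen U hU
  have he₀' : e₀ ∈ c'.source := ⟨hec, he₀⟩
  refine ⟨c'.target, c'.open_target, c'.map_source he₀', fun γ hγ => ?_⟩
  have hsymm : c'.symm (c e₀) = e₀ := c'.left_inv he₀'
  refine ⟨⟨⟨fun t => c'.symm (γ t), c'.continuousOn_symm.comp_continuous γ.continuous hγ⟩,
    by simp [hsymm], by simp [hsymm]⟩, fun t => (c'.map_target (hγ t)).2, ?_⟩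
  ext t
  exact c'.right_inv (hγ t)

namespace IsSemicoveringMap

variable {E : Type*} [TopologicalSpace E] {p : E → X}

lemma continuous (hp : IsSemicoveringMap p) : Continuous p :=
  hp.isLocalHomeomorph.continuous

lemma eq_of_comp_eq (hp : IsSemicoveringMap p) {γ₁ γ₂ : C(I, E)}
    (h : ∀ t, p (γ₁ t) = p (γ₂ t)) (h0 : γ₁ 0 = γ₂ 0) (t : I) : γ₁ t = γ₂ t := by
  obtain ⟨_, -, huniq⟩ := hp.path_lift ((⟨p, hp.continuous⟩ : C(E, X)).comp γ₁) (γ₁ 0) rfl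
  have h₁₂ : γ₁ = γ₂ := (huniq γ₁ ⟨rfl, rfl⟩).trans (huniq γ₂ ⟨(funext h).symm, h0.symm⟩).symm
  rw [h₁₂]

/-- The lift of a homotopy rel endpoints between the images of `a` and `b` starts at `a`, has
constant sides by uniqueness of path lifts, and hence ends at `b`. -/
theorem homotopic_of_map_homotopic (hp : IsSemicoveringMap p) {e₀ e₁ : E} {a b : Path e₀ e₁}
    (h : (a.map hp.continuous).Homotopic (b.map hp.continuous)) : a.Homotopic b := by
  obtain ⟨F⟩ := h
  obtain ⟨H, ⟨hpH, hH00⟩, -⟩ := hp.homotopy_lift F.toContinuousMap e₀ (by simp)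
  have hpH' (q : I × I) : p (H q) = F q := congrFun hpH q
  have hleft : ∀ t, H (0, t) = a t :=
    hp.eq_of_comp_eq (γ₁ := H.curry 0) (γ₂ := a.toContinuousMap) (fun t => by simp [hpH'])
      (by simpa using hH00)
  have hside (t : I) (ht : t ∈ ({0, 1} : Set I)) (s : I) : H (s, t) = H (0, t) :=
    hp.eq_of_comp_eq (γ₁ := ⟨fun s => H (s, t), by fun_prop⟩) (γ₂ := .const I (H (0, t)))
      (fun s => by simp [hpH', F.eq_fst s ht, F.eq_fst 0 ht]) rfl s
  have hright : ∀ t, H (1, t) = b t :=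
    hp.eq_of_comp_eq (γ₁ := H.curry 1) (γ₂ := b.toContinuousMap) (fun t => by simp [hpH'])
      (by simpa [hleft] using hside 0 (by simp) 1)
  exact ⟨{ toContinuousMap := H,
            map_zero_left := hleft,
            map_one_left := hright,
            prop' := fun s t ht => by simpa [hleft] using hside t ht s }⟩

end IsSemicoveringMap

theorem semicovering_strongSLT_lifts
    {E : Type*} [TopologicalSpace E] (p : E → X) (hp : IsSemicoveringMap p)
    (hX : StrongSLT X) : StrongSLT E := by
  intro e₀ e U hU he₀
  obtain ⟨W, hW, he₀W, hlift⟩ := hp.isLocalHomeomorph.exists_nhds_forall_loop_lift hU he₀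
  obtain ⟨V, hV, heV, hVW⟩ := hX (p e₀) (p e) W hW he₀W
  refine ⟨p ⁻¹' V, hV.preimage hp.continuous, heV, fun α β hβ => ?_⟩
  obtain ⟨lam, hlamW, hlam⟩ := hVW (α.map hp.continuous) (β.map hp.continuous) hβ
  obtain ⟨lam', hlam'U, rfl⟩ := hlift lam hlamW
  refine ⟨lam', hlam'U, (loopClass_eq_loopClass_iff _ _).mpr (hp.homotopic_of_map_homotopic ?_)⟩
  rw [Path.map_trans, Path.map_trans, ← Path.map_symm]
  exact (loopClass_eq_loopClass_iff _ _).mp hlam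

end
end
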